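/- arXiv:2411.11397 — 4 statements merged into one kernel-verified Lean document; each statement's English description precedes it below -/
import Mathlib

section
/- Characterization of bipartite binary process functions: let ω : Bool × Bool → Bool × Bool be of the form ω(o₁,o₂) = (f(o₂), g(o₁)) for some f, g : Bool → Bool. Then ω is a process function — i.e., for all interventions h₁, h₂ : Bool → Bool the map (i₁,i₂) ↦ (f(h₂(i₂)), g(h₁(i₁))) has exactly one fixed point — if and only if f is constant or g is constant. -/
/-!
A fixed point `(i₁, i₂)` of `(i₁, i₂) ↦ (F i₂, G i₁)` is determined by its first coordinate,
which is a fixed point of the loop `F ∘ G` (and symmetrically for the second one). If `f` is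
constant with value `c`, every loop `f ∘ h₂ ∘ g ∘ h₁` is constant, so `c` is its unique fixed
point. If neither `f` nor `g` is constant, both are bijections of `Bool`, and the intervention
`h₂ = f⁻¹ ∘ not ∘ g⁻¹` (with `h₁ = id`) turns the loop into `not`, which has no fixed point.
-/

/-- The cross-wired quasi-process `ω (o₁, o₂) = (f o₂, g o₁)` with `Oₖ = Iₖ`, under local
interventions `hₖ`. -/
def IsProcessFunction {α β : Type*} (f : β → α) (g : α → β) : Prop :=
  ∀ (h₁ : α → α) (h₂ : β → β), ∃! i : α × β, (f (h₂ i.2), g (h₁ i.1)) = i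

section

variable {α β : Type*}

theorem existsUnique_crossFixedPt_iff_fst (F : β → α) (G : α → β) :
    (∃! i : α × β, (F i.2, G i.1) = i) ↔ ∃! a, F (G a) = a := by
  simp only [Prod.ext_iff]
  constructor
  · rintro ⟨⟨a, b⟩, ⟨hF, hG⟩, huniq⟩
    dsimp only at hF hG
    refine ⟨a, show F (G a) = a by rwa [hG], fun a' ha' => ?_⟩
    exact congrArg Prod.fst (huniq (a', G a') ⟨ha', rfl⟩)
  · rintro ⟨a, ha, huniq⟩
    refine ⟨(a, G a), ⟨ha, rfl⟩, fun ⟨a', b'⟩ ⟨hF, hG⟩ => ?_⟩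
    dsimp only at hF hG
    subst hG
    rw [huniq a' hF]

theorem existsUnique_crossFixedPt_iff_snd (F : β → α) (G : α → β) :
    (∃! i : α × β, (F i.2, G i.1) = i) ↔ ∃! b, G (F b) = b := by
  rw [← existsUnique_crossFixedPt_iff_fst G F]
  exact (Equiv.prodComm α β).existsUnique_congr fun _ => by simp [Prod.ext_iff, and_comm]

theorem isProcessFunction_of_const_left {f : β → α} {c : α} (hf : ∀ b, f b = c) (g : α → β) :
    IsProcessFunction f g := fun h₁ h₂ =>
  (existsUnique_crossFixedPt_iff_fst (f ∘ h₂) (g ∘ h₁)).2 ⟨c, hf _, fun _ ha => ha ▸ hf _⟩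

theorem isProcessFunction_of_const_right (f : β → α) {g : α → β} {c : β} (hg : ∀ a, g a = c) :
    IsProcessFunction f g := fun h₁ h₂ =>
  (existsUnique_crossFixedPt_iff_snd (f ∘ h₂) (g ∘ h₁)).2 ⟨c, hg _, fun _ hb => hb ▸ hg _⟩

theorem not_isProcessFunction_of_bijective {f : β → α} {g : α → β} (hf : f.Bijective)
    (hg : g.Bijective) {σ : α → α} (hσ : ∀ a, σ a ≠ a) : ¬ IsProcessFunction f g := by
  intro hω
  let ef := Equiv.ofBijective f hf
  let eg := Equiv.ofBijective g hg
  obtain ⟨a, ha, -⟩ := (existsUnique_crossFixedPt_iff_fst (f ∘ ef.symm ∘ σ ∘ eg.symm) g).1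
    (hω id (ef.symm ∘ σ ∘ eg.symm))
  exact hσ a (by simpa [ef, eg, Equiv.ofBijective_apply_symm_apply] using ha)

end

theorem Bool.exists_const_or_bijective (f : Bool → Bool) :
    (∃ c, ∀ b, f b = c) ∨ f.Bijective := by
  by_cases h : f false = f true
  · exact .inl ⟨f true, by rintro (_ | _) <;> simp [h]⟩
  · refine .inr (Finite.injective_iff_bijective.1 fun a b hab => ?_)
    cases a <;> cases b <;> simp_all

/-- Characterization of bipartite binary process functions: `ω(o₁,o₂) = (f o₂, g o₁)`
is a process function (unique fixed point of `(i₁,i₂) ↦ (f (h₂ i₂), g (h₁ i₁))` for all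
interventions `h₁, h₂`) iff `f` is constant or `g` is constant. -/
theorem bipartite_processFunction_iff (f g : Bool → Bool) :
    (∀ h₁ h₂ : Bool → Bool, ∃! i : Bool × Bool, (f (h₂ i.2), g (h₁ i.1)) = i) ↔
      ((∃ c : Bool, ∀ b, f b = c) ∨ (∃ c : Bool, ∀ b, g b = c)) := by
  change IsProcessFunction f g ↔ _
  refine ⟨fun hω => ?_, ?_⟩
  · rcases Bool.exists_const_or_bijective f with hf | hf
    · exact .inl hf
    rcases Bool.exists_const_or_bijective g with hg | hg
    · exact .inr hg
    exact absurd hω (not_isProcessFunction_of_bijective hf hg Bool.not_ne_self)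
  · rintro (⟨c, hf⟩ | ⟨c, hg⟩)
    · exact isProcessFunction_of_const_left hf g
    · exact isProcessFunction_of_const_right f hg
end

section
/- The BFW process wins the GYNIN game perfectly: with the tripartite classical process p(i⃗|o⃗) = ½·δ_{i₁,o₃}δ_{i₂,o₁}δ_{i₃,o₂} + ½·δ_{i₁,¬o₃}δ_{i₂,¬o₁}δ_{i₃,¬o₂} on Bool³ and local interventions p(x_k,o_k|a_k,i_k) = δ_{x_k,i_k}·δ_{o_k,a_k} for each k ∈ {1,2,3}, the resulting correlation p(x⃗|a⃗) = Σ_{i⃗,o⃗} ∏_k p(x_k,o_k|a_k,i_k)·p(i⃗|o⃗) satisfies p(x⃗|a⃗) = ½·δ_{(x₁,x₂,x₃),(a₃,a₁,a₂)} + ½·δ_{(x₁,x₂,x₃),(¬a₃,¬a₁,¬a₂)}, and hence the GYNIN winning probability p_gynin = (1/8)·Σ_{x⃗,a⃗} p(x⃗|a⃗)·(δ_{x₁,a₃}δ_{x₂,a₁}δ_{x₃,a₂} + δ_{x₁,¬a₃}δ_{x₂,¬a₁}δ_{x₃,¬a₂}) equals 1. -/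
open Finset

/-- Kronecker delta on `Bool`, valued in `ℝ`. -/
noncomputable def kd (u v : Bool) : ℝ := if u = v then 1 else 0

/-- The Baumeler–Feix–Wolf classical process `p(i⃗|o⃗)`. -/
noncomputable def bfw (i₁ i₂ i₃ o₁ o₂ o₃ : Bool) : ℝ :=
  (1 / 2) * (kd i₁ o₃ * kd i₂ o₁ * kd i₃ o₂) +
  (1 / 2) * (kd i₁ (!o₃) * kd i₂ (!o₁) * kd i₃ (!o₂))

/-- The correlation obtained from the BFW process with local interventions
`p(x_k,o_k|a_k,i_k) = δ_{x_k,i_k}·δ_{o_k,a_k}`. -/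
noncomputable def bfwCorr (x₁ x₂ x₃ a₁ a₂ a₃ : Bool) : ℝ :=
  ∑ i₁ : Bool, ∑ i₂ : Bool, ∑ i₃ : Bool, ∑ o₁ : Bool, ∑ o₂ : Bool, ∑ o₃ : Bool,
    (kd x₁ i₁ * kd o₁ a₁) * (kd x₂ i₂ * kd o₂ a₂) * (kd x₃ i₃ * kd o₃ a₃) *
      bfw i₁ i₂ i₃ o₁ o₂ o₃

/-! The local interventions are deterministic (`x_k = i_k`, `o_k = a_k`), so summing out `i⃗, o⃗`
merely evaluates the process at `i⃗ = x⃗`, `o⃗ = a⃗`; this gives the correlation, which is half the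
GYNIN win indicator `W`. The two winning events are disjoint, so `W` is idempotent, and for every
`x⃗` exactly two settings `a⃗` win; hence `p_gynin = (1/8) · 8 · (1/2) · 2 = 1`. -/

lemma sum_kd_mul (v : Bool) (f : Bool → ℝ) : ∑ u, kd v u * f u = f v := by
  simp [kd]

lemma sum_kd_mul' (v : Bool) (f : Bool → ℝ) : ∑ u, kd u v * f u = f v := by
  simp [kd, eq_comm]

lemma kd_mul_self (u v : Bool) : kd u v * kd u v = kd u v := by
  unfold kd; split_ifs <;> norm_num

lemma kd_mul_kd_not (u v : Bool) : kd u v * kd u (!v) = 0 := by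
  cases u <;> cases v <;> simp [kd]

lemma sum_kd (u : Bool) : ∑ v, kd u v = 1 := by
  simp [kd]

lemma sum_kd_not (u : Bool) : ∑ v, kd u (!v) = 1 := by
  rw [← sum_kd u]
  exact Equiv.sum_comp (Function.Involutive.toPerm _ Bool.not_not) (kd u)

lemma bfwCorr_eq_bfw (x₁ x₂ x₃ a₁ a₂ a₃ : Bool) :
    bfwCorr x₁ x₂ x₃ a₁ a₂ a₃ = bfw x₁ x₂ x₃ a₁ a₂ a₃ := by
  have regroup : ∀ i₁ i₂ i₃ o₁ o₂ o₃,
      (kd x₁ i₁ * kd o₁ a₁) * (kd x₂ i₂ * kd o₂ a₂) * (kd x₃ i₃ * kd o₃ a₃) *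
        bfw i₁ i₂ i₃ o₁ o₂ o₃ =
      kd x₁ i₁ * (kd x₂ i₂ * (kd x₃ i₃ * (kd o₁ a₁ * (kd o₂ a₂ * (kd o₃ a₃ *
        bfw i₁ i₂ i₃ o₁ o₂ o₃))))) := by
    intros; ring
  simp only [bfwCorr, regroup, ← Finset.mul_sum, sum_kd_mul, sum_kd_mul']

noncomputable def gyninWin (x₁ x₂ x₃ a₁ a₂ a₃ : Bool) : ℝ :=
  kd x₁ a₃ * kd x₂ a₁ * kd x₃ a₂ + kd x₁ (!a₃) * kd x₂ (!a₁) * kd x₃ (!a₂)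

lemma bfw_eq_half_gyninWin (x₁ x₂ x₃ a₁ a₂ a₃ : Bool) :
    bfw x₁ x₂ x₃ a₁ a₂ a₃ = 1 / 2 * gyninWin x₁ x₂ x₃ a₁ a₂ a₃ := by
  rw [bfw, gyninWin, mul_add]

lemma kd_mul_self₃ (u₁ u₂ u₃ v₁ v₂ v₃ : Bool) :
    kd u₁ v₁ * kd u₂ v₂ * kd u₃ v₃ * (kd u₁ v₁ * kd u₂ v₂ * kd u₃ v₃) =
      kd u₁ v₁ * kd u₂ v₂ * kd u₃ v₃ := by
  calc _ = (kd u₁ v₁ * kd u₁ v₁) * (kd u₂ v₂ * kd u₂ v₂) * (kd u₃ v₃ * kd u₃ v₃) := by ring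
    _ = _ := by rw [kd_mul_self, kd_mul_self, kd_mul_self]

lemma gyninWin_mul_self (x₁ x₂ x₃ a₁ a₂ a₃ : Bool) :
    gyninWin x₁ x₂ x₃ a₁ a₂ a₃ * gyninWin x₁ x₂ x₃ a₁ a₂ a₃ = gyninWin x₁ x₂ x₃ a₁ a₂ a₃ := by
  have exclusive : kd x₁ a₃ * kd x₂ a₁ * kd x₃ a₂ * (kd x₁ (!a₃) * kd x₂ (!a₁) * kd x₃ (!a₂)) = 0 := by
    calc _ = kd x₁ a₃ * kd x₁ (!a₃) * (kd x₂ a₁ * kd x₃ a₂ * kd x₂ (!a₁) * kd x₃ (!a₂)) := by ring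
      _ = 0 := by rw [kd_mul_kd_not, zero_mul]
  unfold gyninWin
  linear_combination kd_mul_self₃ x₁ x₂ x₃ a₃ a₁ a₂ + kd_mul_self₃ x₁ x₂ x₃ (!a₃) (!a₁) (!a₂)
    + 2 * exclusive

lemma sum_gyninWin (x₁ x₂ x₃ : Bool) : ∑ a₁, ∑ a₂, ∑ a₃, gyninWin x₁ x₂ x₃ a₁ a₂ a₃ = 2 := by
  simp only [gyninWin, Finset.sum_add_distrib, ← Finset.sum_mul, ← Finset.mul_sum, sum_kd,
    sum_kd_not]
  norm_num

lemma bfwCorr_mul_gyninWin (x₁ x₂ x₃ a₁ a₂ a₃ : Bool) :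
    bfwCorr x₁ x₂ x₃ a₁ a₂ a₃ *
        (kd x₁ a₃ * kd x₂ a₁ * kd x₃ a₂ + kd x₁ (!a₃) * kd x₂ (!a₁) * kd x₃ (!a₂)) =
      1 / 2 * gyninWin x₁ x₂ x₃ a₁ a₂ a₃ := by
  rw [bfwCorr_eq_bfw, bfw_eq_half_gyninWin, mul_assoc]
  exact congrArg _ (gyninWin_mul_self x₁ x₂ x₃ a₁ a₂ a₃)

/-- The BFW process wins the GYNIN game perfectly: the resulting correlation is
`½·δ_{x⃗,(a₃,a₁,a₂)} + ½·δ_{x⃗,(¬a₃,¬a₁,¬a₂)}`, and the GYNIN winning probability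
under uniformly random settings equals 1. -/
theorem bfw_wins_gynin_perfectly :
    (∀ x₁ x₂ x₃ a₁ a₂ a₃ : Bool,
      bfwCorr x₁ x₂ x₃ a₁ a₂ a₃ =
        (1 / 2) * (kd x₁ a₃ * kd x₂ a₁ * kd x₃ a₂) +
        (1 / 2) * (kd x₁ (!a₃) * kd x₂ (!a₁) * kd x₃ (!a₂))) ∧
    (1 / 8) * (∑ x₁ : Bool, ∑ x₂ : Bool, ∑ x₃ : Bool, ∑ a₁ : Bool, ∑ a₂ : Bool, ∑ a₃ : Bool,
        bfwCorr x₁ x₂ x₃ a₁ a₂ a₃ *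
          (kd x₁ a₃ * kd x₂ a₁ * kd x₃ a₂ + kd x₁ (!a₃) * kd x₂ (!a₁) * kd x₃ (!a₂))) = 1 := by
  refine ⟨bfwCorr_eq_bfw, ?_⟩
  simp only [bfwCorr_mul_gyninWin, ← Finset.mul_sum, sum_gyninWin]
  norm_num
end

section
/- For deterministic quasi-process functions, logical consistency under deterministic interventions equals the unique-fixed-point property: let ω : O⃗ → I⃗ be a function between finite product sets and fix deterministic interventions h_k : I_k → O_k. Then Σ_{i⃗,o⃗} δ_{i⃗,ω(o⃗)} · ∏_k δ_{o_k,h_k(i_k)} = |{ i⃗ : ω(h₁(i₁),…,h_N(i_N)) = i⃗ }|; hence the normalization Σ_{x⃗} p(x⃗|a⃗) = 1 holds for these interventions iff the map i⃗ ↦ ω(h(i⃗)) has exactly one fixed point. -/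
open Finset

theorem Fintype.prod_boole_apply_eq {ι M₀ : Type*} [Fintype ι] [CommMonoidWithZero M₀]
    {β : ι → Type*} [∀ k, DecidableEq (β k)] (o f : ∀ k, β k) :
    ∏ k, (if o k = f k then (1 : M₀) else 0) = if o = f then 1 else 0 := by
  simp only [Fintype.prod_boole, funext_iff]

theorem Fintype.sum_sum_boole_mul_boole_eq_card_fixedPoints {α β : Type*}
    [Fintype α] [DecidableEq α] [Fintype β] [DecidableEq β] (ω : β → α) (F : α → β) :
    ∑ i, ∑ o, (if i = ω o then (1 : ℕ) else 0) * (if o = F i then 1 else 0) =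
      #{i | ω (F i) = i} := by
  simp only [mul_boole, sum_ite_eq', card_filter, eq_comm]

/-- For deterministic quasi-process functions, logical consistency under deterministic
interventions is the unique-fixed-point property: the sum
`Σ_{i⃗,o⃗} δ_{i⃗,ω(o⃗)} ∏_k δ_{o_k,h_k(i_k)}` equals the number of fixed points of
`i⃗ ↦ ω(h₁(i₁),…,h_N(i_N))`; hence it equals 1 iff that map has exactly one fixed point. -/
theorem det_consistency_eq_unique_fixed_point {N : ℕ} (I O : Fin N → Type)
    [∀ k, Fintype (I k)] [∀ k, DecidableEq (I k)]
    [∀ k, Fintype (O k)] [∀ k, DecidableEq (O k)]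
    (ω : (∀ k, O k) → (∀ k, I k)) (h : ∀ k, I k → O k) :
    (∑ i : ∀ k, I k, ∑ o : ∀ k, O k,
        (if i = ω o then (1 : ℕ) else 0) * ∏ k, (if o k = h k (i k) then 1 else 0)) =
      (univ.filter (fun i : ∀ k, I k => ω (fun k => h k (i k)) = i)).card ∧
    ((∑ i : ∀ k, I k, ∑ o : ∀ k, O k,
        (if i = ω o then (1 : ℕ) else 0) * ∏ k, (if o k = h k (i k) then 1 else 0)) = 1 ↔
      ∃! i : ∀ k, I k, ω (fun k => h k (i k)) = i) := by
  have hcount : (∑ i : ∀ k, I k, ∑ o : ∀ k, O k,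
        (if i = ω o then (1 : ℕ) else 0) * ∏ k, (if o k = h k (i k) then 1 else 0)) =
      (univ.filter (fun i : ∀ k, I k => ω (fun k => h k (i k)) = i)).card := by
    simp only [Fintype.prod_boole_apply_eq]
    exact Fintype.sum_sum_boole_mul_boole_eq_card_fixedPoints ω fun i k => h k (i k)
  exact ⟨hcount, hcount ▸ (Fintype.existsUnique_iff_card_one _).symm⟩
end

section
/- Under mixtures of one-way causal deterministic strategies the bipartite GYNI winning probability is at most 1/2: for any probability distribution over strategies each of which is either of the form (x₁ = φ(a₁), x₂ = ψ(a₂,a₁)) or (x₂ = φ'(a₂), x₁ = ψ'(a₁,a₂)), the probability (1/4)·Σ_{a₁,a₂∈Bool} δ_{x₁,a₂}δ_{x₂,a₁} of winning GYNI with uniformly random settings is at most 1/2, and this bound is tight. -/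
/-!
In a one-way strategy the first party's outcome is a function of its own setting alone, so for
each of its settings it equals the other party's setting for exactly one of the two values of
the latter: at most two of the four setting pairs can be won. A mixture of such strategies
averages these bounds. Conversely, if party 1 answers anything and party 2, who comes second,
simply copies `a₁`, party 2 is always right, so exactly two of the four pairs are won.
-/

open Finset

/-- A family of deterministic strategies `(X₁ λ, X₂ λ)` is one-way causal if for each `λ`
either party 1 is first (`x₁` depends only on `a₁`) or party 2 is first
(`x₂` depends only on `a₂`). -/
def OneWayCausal {Λ : Type} (X₁ X₂ : Λ → Bool → Bool → Bool) : Prop :=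
  ∀ l : Λ,
    (∃ (φ : Bool → Bool) (ψ : Bool → Bool → Bool),
        ∀ a₁ a₂ : Bool, X₁ l a₁ a₂ = φ a₁ ∧ X₂ l a₁ a₂ = ψ a₂ a₁) ∨
    (∃ (φ' : Bool → Bool) (ψ' : Bool → Bool → Bool),
        ∀ a₁ a₂ : Bool, X₂ l a₁ a₂ = φ' a₂ ∧ X₁ l a₁ a₂ = ψ' a₁ a₂)

lemma kd_nonneg (u v : Bool) : 0 ≤ kd u v := by
  unfold kd; split <;> norm_num

lemma kd_le_one (u v : Bool) : kd u v ≤ 1 := by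
  unfold kd; split <;> norm_num

lemma kd_self (u : Bool) : kd u u = 1 := if_pos rfl

lemma sum_kd_left (u : Bool) : ∑ v : Bool, kd u v = 1 := by
  cases u <;> simp [kd]

/-- Number of GYNI setting pairs `(a₁, a₂)` won by the deterministic strategy `(x₁, x₂)`. -/
noncomputable def gyniWins (x₁ x₂ : Bool → Bool → Bool) : ℝ :=
  ∑ a₁ : Bool, ∑ a₂ : Bool, kd (x₁ a₁ a₂) a₂ * kd (x₂ a₁ a₂) a₁

lemma gyniWins_swap (x₁ x₂ : Bool → Bool → Bool) :
    gyniWins (fun a₁ a₂ => x₂ a₂ a₁) (fun a₁ a₂ => x₁ a₂ a₁) = gyniWins x₁ x₂ := by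
  unfold gyniWins
  rw [sum_comm]
  simp only [mul_comm]

lemma gyniWins_le_two_of_first {x₁ : Bool → Bool → Bool} (x₂ : Bool → Bool → Bool)
    {φ : Bool → Bool} (hφ : ∀ a₁ a₂, x₁ a₁ a₂ = φ a₁) : gyniWins x₁ x₂ ≤ 2 :=
  calc gyniWins x₁ x₂ ≤ ∑ a₁ : Bool, ∑ a₂ : Bool, kd (φ a₁) a₂ := by
        refine sum_le_sum fun a₁ _ => sum_le_sum fun a₂ _ => ?_
        rw [hφ]
        exact mul_le_of_le_one_right (kd_nonneg _ _) (kd_le_one _ _)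
    _ = 2 := by simp only [sum_kd_left, sum_const, card_univ, Fintype.card_bool]; norm_num

lemma gyniWins_le_two_of_second (x₁ : Bool → Bool → Bool) {x₂ : Bool → Bool → Bool}
    {φ' : Bool → Bool} (hφ' : ∀ a₁ a₂, x₂ a₁ a₂ = φ' a₂) : gyniWins x₁ x₂ ≤ 2 :=
  gyniWins_swap x₁ x₂ ▸ gyniWins_le_two_of_first _ fun a₁ a₂ => hφ' a₂ a₁

lemma gyniWins_le_two_of_oneWayCausal {Λ : Type} {X₁ X₂ : Λ → Bool → Bool → Bool}
    (h : OneWayCausal X₁ X₂) (l : Λ) : gyniWins (X₁ l) (X₂ l) ≤ 2 := by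
  rcases h l with ⟨φ, _, hl⟩ | ⟨φ', _, hl⟩
  · exact gyniWins_le_two_of_first _ fun a₁ a₂ => (hl a₁ a₂).1
  · exact gyniWins_le_two_of_second _ fun a₁ a₂ => (hl a₁ a₂).1

lemma gyniWins_copy_first (φ : Bool → Bool) :
    gyniWins (fun a₁ _ => φ a₁) (fun a₁ _ => a₁) = 2 := by
  simp only [gyniWins, kd_self, mul_one, sum_kd_left, sum_const, card_univ, Fintype.card_bool]
  norm_num

/-- Under mixtures of one-way causal deterministic strategies, the bipartite GYNI winning
probability is at most 1/2, and this bound is tight. -/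
theorem gyni_causal_bound_and_tightness :
    (∀ (Λ : Type) (_ : Fintype Λ) (q : Λ → ℝ) (X₁ X₂ : Λ → Bool → Bool → Bool),
      (∀ l, 0 ≤ q l) → (∑ l, q l) = 1 → OneWayCausal X₁ X₂ →
      (∑ l, q l * ((1 / 4) * ∑ a₁ : Bool, ∑ a₂ : Bool,
          kd (X₁ l a₁ a₂) a₂ * kd (X₂ l a₁ a₂) a₁)) ≤ 1 / 2) ∧
    (∃ (Λ : Type) (_ : Fintype Λ) (q : Λ → ℝ) (X₁ X₂ : Λ → Bool → Bool → Bool),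
      (∀ l, 0 ≤ q l) ∧ (∑ l, q l) = 1 ∧ OneWayCausal X₁ X₂ ∧
      (∑ l, q l * ((1 / 4) * ∑ a₁ : Bool, ∑ a₂ : Bool,
          kd (X₁ l a₁ a₂) a₂ * kd (X₂ l a₁ a₂) a₁)) = 1 / 2) := by
  constructor
  · intro Λ _ q X₁ X₂ hq hq1 hc
    calc ∑ l, q l * ((1 / 4) * gyniWins (X₁ l) (X₂ l))
        ≤ ∑ l, q l * (1 / 2) := sum_le_sum fun l _ =>
          mul_le_mul_of_nonneg_left (by linarith [gyniWins_le_two_of_oneWayCausal hc l]) (hq l)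
      _ = 1 / 2 := by rw [← sum_mul, hq1, one_mul]
  · refine ⟨Unit, inferInstance, fun _ => 1, fun _ _ _ => false, fun _ a₁ _ => a₁,
      fun _ => zero_le_one, by simp,
      fun _ => Or.inl ⟨fun _ => false, fun _ a₁ => a₁, fun _ _ => ⟨rfl, rfl⟩⟩, ?_⟩
    change ∑ _ : Unit, 1 * ((1 / 4) * gyniWins (fun _ _ => false) (fun a₁ _ => a₁)) = 1 / 2
    rw [gyniWins_copy_first (fun _ => false)]
    simp only [Fintype.univ_unit, sum_singleton]
    norm_num
end
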